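/- Let U be a graphon, s ∈ (0,1], and φ : [0,1] → [0,1] the map x ↦ s·x. Then the pull-back U^φ(x,y) := U(sx, sy) is a graphon, and the cut distance satisfies δ_□(U, U^φ) ≤ 2(1/s − 1). -/

import Mathlib

open MeasureTheory

noncomputable def lam : Measure ℝ := volume.restrict (Set.Icc 0 1)

/-- A graphon: a symmetric measurable function `[0,1]² → [0,1]`. -/
def IsGraphon (U : ℝ → ℝ → ℝ) : Prop :=
  Measurable (Function.uncurry U) ∧ (∀ x y, U x y = U y x) ∧
    ∀ x y, U x y ∈ Set.Icc (0:ℝ) 1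

/-- The cut norm of the difference of two kernels:
`d_□(U,V) = sup_{A,B ⊆ [0,1]} |∫_{A×B}(U−V)|`. -/
noncomputable def cutNormDist (U V : ℝ → ℝ → ℝ) : ℝ :=
  sSup {r : ℝ | ∃ A B : Set ℝ, MeasurableSet A ∧ MeasurableSet B ∧
    r = |∫ x in A, ∫ y in B, (U x y - V x y) ∂lam ∂lam|}

/-- The cut distance `δ_□(U,V) = inf_{φ,ψ} d_□(U^φ, V^ψ)`, the infimum being over
measure-preserving maps `φ, ψ : [0,1] → [0,1]`. -/
noncomputable def cutDist (U V : ℝ → ℝ → ℝ) : ℝ :=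
  sInf {r : ℝ | ∃ φ ψ : ℝ → ℝ, MeasurePreserving φ lam lam ∧ MeasurePreserving ψ lam lam ∧
    r = cutNormDist (fun x y => U (φ x) (φ y)) (fun x y => V (ψ x) (ψ y))}

/-!
Let `ψ = splitStretch s` stretch `[0, s]` and `(s, 1]` linearly onto `[0, 1]`. It is measure
preserving and `s · ψ x = x` on `[0, s]`, so `U` and `(U^φ)^ψ` agree on `[0, s]²`. Both take values
in `[0, 1]`, so their cut distance is at most `1 - s²`, the measure of the complement of that
square, and `1 - s² ≤ 2 (1/s - 1)`.
-/

open Set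

lemma IsGraphon.comp {U : ℝ → ℝ → ℝ} (hU : IsGraphon U) {f : ℝ → ℝ} (hf : Measurable f) :
    IsGraphon fun x y => U (f x) (f y) :=
  ⟨hU.1.comp (hf.prodMap hf), fun _ _ => hU.2.1 _ _, fun _ _ => hU.2.2 _ _⟩

lemma IsGraphon.abs_sub_le_one {U V : ℝ → ℝ → ℝ} (hU : IsGraphon U) (hV : IsGraphon V)
    (x y x' y' : ℝ) : |U x y - V x' y'| ≤ 1 :=
  abs_sub_le_of_nonneg_of_le (hU.2.2 x y).1 (hU.2.2 x y).2 (hV.2.2 x' y').1 (hV.2.2 x' y').2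

instance : IsProbabilityMeasure lam :=
  ⟨by simp [lam]⟩

lemma cutNormDist_nonneg (U V : ℝ → ℝ → ℝ) : 0 ≤ cutNormDist U V :=
  Real.sSup_nonneg fun _ ⟨_, _, _, _, hr⟩ => hr ▸ abs_nonneg _

lemma cutDist_le_cutNormDist {U V : ℝ → ℝ → ℝ} {φ ψ : ℝ → ℝ}
    (hφ : MeasurePreserving φ lam lam) (hψ : MeasurePreserving ψ lam lam) :
    cutDist U V ≤ cutNormDist (fun x y => U (φ x) (φ y)) (fun x y => V (ψ x) (ψ y)) :=
  csInf_le ⟨0, fun _ ⟨_, _, _, _, hr⟩ => hr ▸ cutNormDist_nonneg _ _⟩ ⟨φ, ψ, hφ, hψ, rfl⟩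

lemma cutNormDist_le_measureReal {U W : ℝ → ℝ → ℝ} {S : Set (ℝ × ℝ)} (hS : MeasurableSet S)
    (hle : ∀ x y, |U x y - W x y| ≤ 1) (heq : ∀ x y, (x, y) ∉ S → U x y = W x y) :
    cutNormDist U W ≤ (lam.prod lam).real S := by
  set F : ℝ × ℝ → ℝ := S.indicator 1
  have hdom : ∀ x y, |U x y - W x y| ≤ F (x, y) := fun x y => by
    by_cases h : (x, y) ∈ S
    · simpa [F, h] using hle x y
    · simp [F, h, heq x y h]
  have hF : Integrable F (lam.prod lam) := (integrable_const 1).indicator hS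
  refine Real.sSup_le ?_ measureReal_nonneg
  rintro r ⟨A, B, -, -, rfl⟩
  have hAB : Integrable F ((lam.restrict A).prod (lam.restrict B)) := by
    rw [Measure.prod_restrict]
    exact hF.integrableOn
  calc |∫ x in A, ∫ y in B, (U x y - W x y) ∂lam ∂lam|
      ≤ ∫ x in A, |∫ y in B, (U x y - W x y) ∂lam| ∂lam := abs_integral_le_integral_abs
    _ ≤ ∫ x in A, ∫ y in B, F (x, y) ∂lam ∂lam := by
        refine integral_mono_of_nonneg (ae_of_all _ fun _ => abs_nonneg _)
          hAB.integral_prod_left ?_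
        filter_upwards [hAB.prod_right_ae] with x hx
        exact abs_integral_le_integral_abs.trans
          (integral_mono_of_nonneg (ae_of_all _ fun _ => abs_nonneg _) hx (ae_of_all _ (hdom x)))
    _ = ∫ p in A ×ˢ B, F p ∂lam.prod lam := (setIntegral_prod _ hF.integrableOn).symm
    _ ≤ ∫ p, F p ∂lam.prod lam :=
        setIntegral_le_integral hF (ae_of_all _ (indicator_nonneg fun _ _ => zero_le_one))
    _ = (lam.prod lam).real S := integral_indicator_one hS

lemma lam_Iic {s : ℝ} (hs : s ≤ 1) : lam (Iic s) = ENNReal.ofReal s := by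
  have h : Iic s ∩ Icc 0 1 = Icc 0 s := by
    ext x
    simp only [mem_inter_iff, mem_Iic, mem_Icc]
    exact ⟨fun ⟨hxs, hx0, _⟩ => ⟨hx0, hxs⟩, fun ⟨hx0, hxs⟩ => ⟨hxs, hx0, hxs.trans hs⟩⟩
  rw [lam, Measure.restrict_apply measurableSet_Iic, h, Real.volume_Icc, sub_zero]

lemma measureReal_prod_compl_Iic {s : ℝ} (hs : s ∈ Icc (0 : ℝ) 1) :
    (lam.prod lam).real (Iic s ×ˢ Iic s)ᶜ = 1 - s ^ 2 := by
  rw [measureReal_compl (measurableSet_Iic.prod measurableSet_Iic), measureReal_prod_prod,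
    probReal_univ, measureReal_def, lam_Iic hs.2, ENNReal.toReal_ofReal hs.1, sq]

lemma Real.map_volume_restrict_Ioc_div_sub {a b : ℝ} (hab : a ≤ b) :
    (volume.restrict (Ioc a b)).map (fun x => (x - a) / (b - a)) =
      ENNReal.ofReal (b - a) • volume.restrict (Ioc 0 1) := by
  rcases hab.eq_or_lt with rfl | hab
  · simp
  have hc : 0 < b - a := sub_pos.2 hab
  have hmeas : Measurable fun x : ℝ => (x - a) / (b - a) := by fun_prop
  ext E hE
  have hpre : (fun x => (x - a) / (b - a)) ⁻¹' E ∩ Ioc a b =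
      (· + -a) ⁻¹' ((· * (b - a)⁻¹) ⁻¹' (E ∩ Ioc 0 1)) := by
    ext x
    simp only [mem_inter_iff, mem_preimage, mem_Ioc, ← div_eq_mul_inv, ← sub_eq_add_neg,
      div_pos_iff_of_pos_right hc, div_le_one hc, sub_pos, sub_le_sub_iff_right]
  rw [Measure.map_apply hmeas hE, Measure.restrict_apply (hmeas hE), Measure.smul_apply,
    Measure.restrict_apply hE, hpre, measure_preimage_add_right, Real.volume_preimage_mul_right
    (inv_ne_zero hc.ne'), inv_inv, abs_of_pos hc, smul_eq_mul]

lemma lam_eq_restrict_Ioc : lam = volume.restrict (Ioc 0 1) :=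
  Measure.restrict_congr_set Ioc_ae_eq_Icc.symm

noncomputable def splitStretch (s x : ℝ) : ℝ := if x ≤ s then x / s else (x - s) / (1 - s)

lemma measurePreserving_splitStretch {s : ℝ} (hs : s ∈ Ioc (0 : ℝ) 1) :
    MeasurePreserving (splitStretch s) lam lam := by
  obtain ⟨hs0, hs1⟩ := hs
  have hmeas : Measurable (splitStretch s) :=
    Measurable.ite measurableSet_Iic (by fun_prop) (by fun_prop)
  refine ⟨hmeas, ?_⟩
  have hleft : (volume.restrict (Ioc 0 s)).map (splitStretch s) =
      (volume.restrict (Ioc 0 s)).map (fun x => (x - 0) / (s - 0)) :=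
    Measure.map_congr <| ae_restrict_of_forall_mem measurableSet_Ioc fun x hx => by
      simp [splitStretch, hx.2]
  have hright : (volume.restrict (Ioc s 1)).map (splitStretch s) =
      (volume.restrict (Ioc s 1)).map (fun x => (x - s) / (1 - s)) :=
    Measure.map_congr <| ae_restrict_of_forall_mem measurableSet_Ioc fun x hx => by
      simp [splitStretch, not_le.2 hx.1]
  have hsplit : lam = volume.restrict (Ioc 0 s) + volume.restrict (Ioc s 1) := by
    rw [lam_eq_restrict_Ioc, ← Ioc_union_Ioc_eq_Ioc hs0.le hs1,
      Measure.restrict_union (Ioc_disjoint_Ioc_of_le le_rfl) measurableSet_Ioc]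
  calc lam.map (splitStretch s)
      = ENNReal.ofReal s • lam + ENNReal.ofReal (1 - s) • lam := by
        conv_lhs => rw [hsplit]
        rw [Measure.map_add _ _ hmeas, hleft, hright,
          Real.map_volume_restrict_Ioc_div_sub hs0.le, Real.map_volume_restrict_Ioc_div_sub hs1,
          sub_zero, lam_eq_restrict_Ioc]
    _ = lam := by
        rw [← add_smul, ← ENNReal.ofReal_add hs0.le (sub_nonneg.2 hs1), add_sub_cancel,
          ENNReal.ofReal_one, one_smul]

lemma mul_splitStretch_of_le {s x : ℝ} (hs : s ≠ 0) (hx : x ≤ s) :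
    s * splitStretch s x = x := by
  rw [splitStretch, if_pos hx, mul_div_cancel₀ _ hs]

lemma one_sub_sq_le_two_mul_one_div_sub_one {s : ℝ} (hs : 0 < s) :
    1 - s ^ 2 ≤ 2 * (1 / s - 1) := by
  have h : 2 * (1 / s - 1) - (1 - s ^ 2) = (1 - s) ^ 2 * (2 + s) / s := by
    field_simp; ring
  have : 0 ≤ (1 - s) ^ 2 * (2 + s) / s := by positivity
  linarith

/-- For a graphon `U` and `s ∈ (0,1]`, the pull-back `U^φ(x,y) = U(sx, sy)` along
`φ : x ↦ s·x` is a graphon, and `δ_□(U, U^φ) ≤ 2(1/s − 1)`. -/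
theorem stmt8 (U : ℝ → ℝ → ℝ) (hU : IsGraphon U) (s : ℝ) (hs : s ∈ Set.Ioc (0:ℝ) 1) :
    IsGraphon (fun x y => U (s * x) (s * y)) ∧
    cutDist U (fun x y => U (s * x) (s * y)) ≤ 2 * (1 / s - 1) := by
  have hpull : IsGraphon fun x y => U (s * x) (s * y) := hU.comp (measurable_const_mul s)
  refine ⟨hpull, ?_⟩
  have hagree : ∀ x y, (x, y) ∉ (Iic s ×ˢ Iic s)ᶜ →
      U x y = U (s * splitStretch s x) (s * splitStretch s y) := fun x y hxy => by
    obtain ⟨hx, hy⟩ := mem_prod.1 (not_notMem.1 hxy)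
    rw [mul_splitStretch_of_le hs.1.ne' hx, mul_splitStretch_of_le hs.1.ne' hy]
  calc cutDist U (fun x y => U (s * x) (s * y))
      ≤ cutNormDist (fun x y => U (id x) (id y))
          (fun x y => U (s * splitStretch s x) (s * splitStretch s y)) :=
        cutDist_le_cutNormDist (.id lam) (measurePreserving_splitStretch hs)
    _ ≤ (lam.prod lam).real (Iic s ×ˢ Iic s)ᶜ :=
        cutNormDist_le_measureReal (measurableSet_Iic.prod measurableSet_Iic).compl
          (fun _ _ => hU.abs_sub_le_one hpull _ _ _ _) hagree
    _ = 1 - s ^ 2 := measureReal_prod_compl_Iic ⟨hs.1.le, hs.2⟩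
    _ ≤ 2 * (1 / s - 1) := one_sub_sq_le_two_mul_one_div_sub_one hs.1
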